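/- Let μ, y ∈ ℝ and let s > 0, β > 0, and set μ' = μ + s·(y − μ)/(s + β⁻¹) and s' = s·β⁻¹/(s + β⁻¹). Let 0 ≤ a < b < ∞ and let L : ℝ → ℝ be measurable with a ≤ L(f) ≤ b for all f. Then ∫ L dN(μ, s) − ∫ L dN(μ', s') ≤ (1/2)·β·s − (1/2)·log(1 + β·s) + (1/2)·(β·s/(s + β⁻¹))·(y − μ)² + 2·log((e^a + e^b)/2) − a − b. -/

import Mathlib

/-!
By the Donsker–Varadhan change of measure (nonnegativity of `KL(P ‖ Q_L)` for the tilted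
measure `dQ_L ∝ e^L dQ`), `∫ L dP ≤ KL(P ‖ Q) + log ∫ e^L dQ`. For `P = N(μ, s)` and
`Q = N(μ', s')` the divergence is explicit and gives the first three terms of the bound.
The remaining gap `log ∫ e^L dQ - ∫ L dQ` is at most `C`: pointwise
`e^L + e^(a+b-L) ≤ e^a + e^b`, and Jensen gives `∫ e^(a+b-L) dQ ≥ t := e^(a+b-∫ L dQ)`, so
`t ∫ e^L dQ ≤ t (e^a + e^b - t) ≤ ((e^a + e^b)/2)²`.
-/

open MeasureTheory ProbabilityTheory Real
open scoped NNReal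

-- `(e^x - e^a) (e^b - e^x) ≥ 0`, divided by `e^x`.
lemma exp_add_exp_sub_le {a b x : ℝ} (hax : a ≤ x) (hxb : x ≤ b) :
    exp x + exp (a + b - x) ≤ exp a + exp b := by
  have h : exp (a + b - x) * exp x = exp a * exp b := by rw [← exp_add, ← exp_add]; ring_nf
  nlinarith [exp_pos x, exp_le_exp.2 hax, exp_le_exp.2 hxb]

section ChangeOfMeasure

variable {α : Type*} [MeasurableSpace α] {μ ν : Measure α}
  [IsProbabilityMeasure μ] [IsProbabilityMeasure ν] {f : α → ℝ} {a b : ℝ}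

lemma integral_le_integral_llr_add_log_integral_exp (hμν : μ ≪ ν)
    (h_llr : Integrable (llr μ ν) μ) (hfμ : Integrable f μ)
    (hfν : Integrable (fun x ↦ exp (f x)) ν) :
    ∫ x, f x ∂μ ≤ ∫ x, llr μ ν x ∂μ + log (∫ x, exp (f x) ∂ν) := by
  have := isProbabilityMeasure_tilted hfν
  have hgibbs := InformationTheory.integral_llr_add_sub_measure_univ_nonneg
    (hμν.trans (absolutelyContinuous_tilted hfν))
    (integrable_llr_tilted_right hμν hfμ h_llr hfν)
  rw [integral_llr_tilted_right hμν hfμ hfν h_llr] at hgibbs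
  simp only [probReal_univ] at hgibbs
  linarith

lemma log_integral_exp_sub_integral_le (hf : AEMeasurable f ν) (ha : ∀ x, a ≤ f x)
    (hb : ∀ x, f x ≤ b) :
    log (∫ x, exp (f x) ∂ν) - ∫ x, f x ∂ν ≤ 2 * log ((exp a + exp b) / 2) - a - b := by
  set m := ∫ x, f x ∂ν
  set S := exp a + exp b
  have hf_int : Integrable f ν := .of_mem_Icc a b hf (ae_of_all _ fun x ↦ ⟨ha x, hb x⟩)
  have hexp_int : Integrable (fun x ↦ exp (f x)) ν :=
    .of_mem_Icc (exp a) (exp b) hf.exp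
      (ae_of_all _ fun x ↦ ⟨exp_le_exp.2 (ha x), exp_le_exp.2 (hb x)⟩)
  have hrefl_int : Integrable (fun x ↦ exp (a + b - f x)) ν :=
    .of_mem_Icc (exp a) (exp b) (hf.const_sub _).exp
      (ae_of_all _ fun x ↦
        ⟨exp_le_exp.2 (by linarith [hb x]), exp_le_exp.2 (by linarith [ha x])⟩)
  have hjensen : exp (a + b - m) ≤ ∫ x, exp (a + b - f x) ∂ν := by
    have h := convexOn_exp.map_integral_le continuous_exp.continuousOn isClosed_univ
      (ae_of_all _ fun x ↦ Set.mem_univ (a + b - f x)) ((integrable_const _).sub hf_int) hrefl_int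
    rwa [integral_sub (integrable_const _) hf_int, integral_const, probReal_univ, one_smul] at h
  have hsum : ∫ x, exp (f x) ∂ν + ∫ x, exp (a + b - f x) ∂ν ≤ S := by
    rw [← integral_add hexp_int hrefl_int]
    simpa using integral_mono (hexp_int.add hrefl_int) (integrable_const S)
      fun x ↦ exp_add_exp_sub_le (ha x) (hb x)
  have hZ : 0 < ∫ x, exp (f x) ∂ν := integral_exp_pos hexp_int
  have ht : 0 < exp (a + b - m) := exp_pos _
  have hprod : (∫ x, exp (f x) ∂ν) * exp (a + b - m) ≤ (S / 2) ^ 2 := by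
    nlinarith [sq_nonneg (S / 2 - exp (a + b - m))]
  have hlog := log_le_log (by positivity) hprod
  rw [log_mul hZ.ne' ht.ne', log_exp, log_pow] at hlog
  push_cast at hlog
  linarith

lemma integral_sub_integral_le_integral_llr_add (hμν : μ ≪ ν)
    (h_llr : Integrable (llr μ ν) μ) (hf : Measurable f) (ha : ∀ x, a ≤ f x)
    (hb : ∀ x, f x ≤ b) :
    ∫ x, f x ∂μ - ∫ x, f x ∂ν
      ≤ ∫ x, llr μ ν x ∂μ + (2 * log ((exp a + exp b) / 2) - a - b) := by
  have hfμ : Integrable f μ :=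
    .of_mem_Icc a b hf.aemeasurable (ae_of_all _ fun x ↦ ⟨ha x, hb x⟩)
  have hfν : Integrable (fun x ↦ exp (f x)) ν :=
    .of_mem_Icc (exp a) (exp b) hf.exp.aemeasurable
      (ae_of_all _ fun x ↦ ⟨exp_le_exp.2 (ha x), exp_le_exp.2 (hb x)⟩)
  linarith [integral_le_integral_llr_add_log_integral_exp hμν h_llr hfμ hfν,
    log_integral_exp_sub_integral_le hf.aemeasurable ha hb (ν := ν)]

end ChangeOfMeasure

section GaussianKL

variable {m₁ m₂ : ℝ} {v₁ v₂ : ℝ≥0}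

lemma log_gaussianPDFReal (m : ℝ) {v : ℝ≥0} (hv : v ≠ 0) (x : ℝ) :
    log (gaussianPDFReal m v x) = -log (2 * π * v) / 2 - (x - m) ^ 2 / (2 * v) := by
  have : 0 < 2 * π * v := by positivity
  rw [gaussianPDFReal, log_mul (by positivity) (exp_ne_zero _), log_inv, log_exp,
    log_sqrt this.le]
  ring

lemma llr_gaussianReal (hv₁ : v₁ ≠ 0) (hv₂ : v₂ ≠ 0) :
    llr (gaussianReal m₁ v₁) (gaussianReal m₂ v₂) =ᵐ[gaussianReal m₁ v₁]
      fun x ↦ log (v₂ / v₁) / 2 + (x - m₂) ^ 2 / (2 * v₂)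
        - (x - m₁) ^ 2 / (2 * v₁) := by
  have hratio : (gaussianReal m₁ v₁).rnDeriv (gaussianReal m₂ v₂) =ᵐ[volume]
      fun x ↦ (gaussianPDF m₂ v₂ x)⁻¹ * gaussianPDF m₁ v₁ x := by
    rw [gaussianReal_of_var_ne_zero m₂ hv₂]
    filter_upwards [Measure.rnDeriv_withDensity_right (gaussianReal m₁ v₁) volume
      (measurable_gaussianPDF m₂ v₂).aemeasurable
      (ae_of_all _ fun x ↦ (gaussianPDF_pos m₂ hv₂ x).ne')
      (ae_of_all _ fun _ ↦ gaussianPDF_ne_top), rnDeriv_gaussianReal m₁ v₁] with x hx hx₁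
    rw [hx, hx₁]
  have hv₁' : (0 : ℝ) < v₁ := by positivity
  have hv₂' : (0 : ℝ) < v₂ := by positivity
  filter_upwards [gaussianReal_absolutelyContinuous m₁ hv₁ hratio] with x hx
  simp only [llr_def, hx, ENNReal.toReal_mul, ENNReal.toReal_inv, toReal_gaussianPDF]
  rw [log_mul (inv_pos.2 (gaussianPDFReal_pos _ _ _ hv₂)).ne'
      (gaussianPDFReal_pos _ _ _ hv₁).ne', log_inv,
    log_gaussianPDFReal m₁ hv₁, log_gaussianPDFReal m₂ hv₂, log_div hv₂'.ne' hv₁'.ne',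
    log_mul (by positivity) hv₁'.ne', log_mul (by positivity) hv₂'.ne']
  ring

lemma integrable_sub_sq_gaussianReal (m c : ℝ) (v : ℝ≥0) :
    Integrable (fun x ↦ (x - c) ^ 2) (gaussianReal m v) :=
  ((memLp_id_gaussianReal 2).sub (memLp_const c)).integrable_sq

lemma integral_sub_sq_gaussianReal (m c : ℝ) (v : ℝ≥0) :
    ∫ x, (x - c) ^ 2 ∂gaussianReal m v = v + (m - c) ^ 2 := by
  have hvar := variance_eq_sub (memLp_id_gaussianReal (μ := m - c) (v := v) 2)
  rw [variance_id_gaussianReal] at hvar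
  simp only [id_eq, Pi.pow_apply, integral_id_gaussianReal] at hvar
  rw [← gaussianReal_map_sub_const c, integral_map (by fun_prop) (by fun_prop)] at hvar
  linarith

lemma integrable_llr_gaussianReal (hv₁ : v₁ ≠ 0) (hv₂ : v₂ ≠ 0) :
    Integrable (llr (gaussianReal m₁ v₁) (gaussianReal m₂ v₂)) (gaussianReal m₁ v₁) :=
  (((integrable_const _).add ((integrable_sub_sq_gaussianReal m₁ m₂ v₁).div_const _)).sub
    ((integrable_sub_sq_gaussianReal m₁ m₁ v₁).div_const _)).congr
    (llr_gaussianReal hv₁ hv₂).symm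

lemma integral_llr_gaussianReal (hv₁ : v₁ ≠ 0) (hv₂ : v₂ ≠ 0) :
    ∫ x, llr (gaussianReal m₁ v₁) (gaussianReal m₂ v₂) x ∂gaussianReal m₁ v₁
      = (log (v₂ / v₁) + (v₁ + (m₁ - m₂) ^ 2) / v₂ - 1) / 2 := by
  have h₂ : Integrable (fun x ↦ (x - m₂) ^ 2 / (2 * v₂)) (gaussianReal m₁ v₁) :=
    (integrable_sub_sq_gaussianReal m₁ m₂ v₁).div_const _
  have h₁ : Integrable (fun x ↦ (x - m₁) ^ 2 / (2 * v₁)) (gaussianReal m₁ v₁) :=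
    (integrable_sub_sq_gaussianReal m₁ m₁ v₁).div_const _
  rw [integral_congr_ae (llr_gaussianReal hv₁ hv₂),
    integral_sub (f := fun x ↦ _ + _) ((integrable_const _).add h₂) h₁,
    integral_add (integrable_const _) h₂]
  have hv₁' : (0 : ℝ) < v₁ := by positivity
  have hv₂' : (0 : ℝ) < v₂ := by positivity
  simp only [integral_const, probReal_univ, smul_eq_mul, one_mul]
  rw [integral_div, integral_div, integral_sub_sq_gaussianReal, integral_sub_sq_gaussianReal]
  field_simp
  ring

end GaussianKL

theorem expected_loss_diff_gaussian_bayes_update_le_general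
    (μ y : ℝ) (s β : ℝ≥0) (hs : 0 < s) (hβ : 0 < β)
    (a b : ℝ)
    (L : ℝ → ℝ) (hL : Measurable L) (hLa : ∀ f, a ≤ L f) (hLb : ∀ f, L f ≤ b) :
    ∫ f, L f ∂(gaussianReal μ s)
        - ∫ f, L f ∂(gaussianReal (μ + (s : ℝ) * (y - μ) / ((s : ℝ) + (β : ℝ)⁻¹))
            (s * β⁻¹ / (s + β⁻¹))) ≤
      (1 / 2) * (β : ℝ) * (s : ℝ) - (1 / 2) * Real.log (1 + (β : ℝ) * (s : ℝ))
        + (1 / 2) * ((β : ℝ) * (s : ℝ) / ((s : ℝ) + (β : ℝ)⁻¹)) * (y - μ) ^ 2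
        + 2 * Real.log ((Real.exp a + Real.exp b) / 2) - a - b := by
  set μ' := μ + (s : ℝ) * (y - μ) / ((s : ℝ) + (β : ℝ)⁻¹)
  set s' := s * β⁻¹ / (s + β⁻¹)
  have hs' : s' ≠ 0 := by positivity
  have hbound := integral_sub_integral_le_integral_llr_add
    ((gaussianReal_absolutelyContinuous μ hs.ne').trans
      (gaussianReal_absolutelyContinuous' μ' hs'))
    (integrable_llr_gaussianReal hs.ne' hs') hL hLa hLb
  have hsR : (0 : ℝ) < s := hs
  have hβR : (0 : ℝ) < β := hβ
  have hs'R : (s' : ℝ) = s / (1 + (β : ℝ) * s) := by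
    simp only [s', NNReal.coe_div, NNReal.coe_mul, NNReal.coe_inv, NNReal.coe_add]
    field_simp
    ring
  have hratio : (s' : ℝ) / s = (1 + (β : ℝ) * s)⁻¹ := by rw [hs'R]; field_simp
  have hkl : ∫ x, llr (gaussianReal μ s) (gaussianReal μ' s') x ∂gaussianReal μ s
      = (1 / 2) * (β : ℝ) * (s : ℝ) - (1 / 2) * Real.log (1 + (β : ℝ) * (s : ℝ))
        + (1 / 2) * ((β : ℝ) * (s : ℝ) / ((s : ℝ) + (β : ℝ)⁻¹)) * (y - μ) ^ 2 := by
    rw [integral_llr_gaussianReal hs.ne' hs', hratio, log_inv, hs'R]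
    simp only [μ']
    field_simp
    ring
  linarith

/-- **The paper's deterministic upper bound (Eq. (6)), combining Theorem 1 with Lemma 4
(supplementary).** For a Gaussian posterior `N(μ, s)` and its Bayes update `N(μ', s')` after
observing `y` with Gaussian noise precision `β`, where `μ' = μ + s (y − μ)/(s + β⁻¹)` and
`s' = s β⁻¹/(s + β⁻¹)`, and any measurable loss `L` with values in `[a, b]`, `0 ≤ a < b`,
the reduction of the expected loss is bounded by the closed-form KL divergence plus
`C = 2 log((eᵃ + eᵇ)/2) − a − b`. -/
theorem expected_loss_diff_gaussian_bayes_update_le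
    (μ y : ℝ) (s β : ℝ≥0) (hs : 0 < s) (hβ : 0 < β)
    (a b : ℝ) (ha : 0 ≤ a) (hab : a < b)
    (L : ℝ → ℝ) (hL : Measurable L) (hLa : ∀ f, a ≤ L f) (hLb : ∀ f, L f ≤ b) :
    ∫ f, L f ∂(gaussianReal μ s)
        - ∫ f, L f ∂(gaussianReal (μ + (s : ℝ) * (y - μ) / ((s : ℝ) + (β : ℝ)⁻¹))
            (s * β⁻¹ / (s + β⁻¹))) ≤
      (1 / 2) * (β : ℝ) * (s : ℝ) - (1 / 2) * Real.log (1 + (β : ℝ) * (s : ℝ))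
        + (1 / 2) * ((β : ℝ) * (s : ℝ) / ((s : ℝ) + (β : ℝ)⁻¹)) * (y - μ) ^ 2
        + 2 * Real.log ((Real.exp a + Real.exp b) / 2) - a - b :=
  expected_loss_diff_gaussian_bayes_update_le_general μ y s β hs hβ a b L hL hLa hLb
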